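/- arXiv:1801.05501 — 2 statements merged into one kernel-verified Lean document; each statement's English description precedes it below -/
import Mathlib

section
/- Let n ∈ ℕ, let ε ∈ D_{(1,*)}(2n), let (γ_h)_{h∈ε^{-1}(*)} be a tuple of choices with 1 ≤ γ_h ≤ Choice_ε(h), and let π ∈ Φ_n^{-1}(ε) be the pair-partition parametrized by these choices via the standard pairing procedure. Then the number of crossings of π equals the sum over h ∈ ε^{-1}(*) of (γ_h − 1). -/
open scoped Classical

/-- A pair-partition of `Fin m`: every equivalence class has exactly 2 elements. -/
def IsPairPartition {m : ℕ} (π : Setoid (Fin m)) : Prop :=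
  ∀ i : Fin m, Nat.card {j : Fin m // π.r i j} = 2

/-- Number of crossings of a pair-partition, counted as quadruples a<b<c<d with
a ~ c, b ~ d, ¬ a ~ b. -/
noncomputable def crossings {m : ℕ} (π : Setoid (Fin m)) : ℕ :=
  Nat.card {t : Fin m × Fin m × Fin m × Fin m //
    t.1 < t.2.1 ∧ t.2.1 < t.2.2.1 ∧ t.2.2.1 < t.2.2.2 ∧
    π.r t.1 t.2.2.1 ∧ π.r t.2.1 t.2.2.2 ∧ ¬ π.r t.1 t.2.1}

/-- Number of blocks of a partition (setoid). -/
noncomputable def numBlocks {m : ℕ} (π : Setoid (Fin m)) : ℕ :=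
  Nat.card (Quotient π)

/-- The rainbow pair-partition ρ_{2n} (0-indexed: i paired with 2n-1-i). -/
def rainbow (n : ℕ) : Setoid (Fin (2*n)) where
  r i j := i = j ∨ (i : ℕ) + (j : ℕ) = 2*n - 1
  iseqv := by
    refine ⟨fun i => Or.inl rfl, ?_, ?_⟩
    · rintro i j (rfl | h)
      · exact Or.inl rfl
      · exact Or.inr (by omega)
    · rintro i j k (rfl | h1) (h2 | h2)
      · exact Or.inl h2
      · exact Or.inr h2
      · subst h2; exact Or.inr h1
      · have hi := i.2; have hk := k.2
        exact Or.inl (Fin.ext (by omega))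

/-- The interval pair-partition { {1,2}, {3,4}, ... } (0-indexed: blocks {2k,2k+1}). -/
def intervalPP (n : ℕ) : Setoid (Fin (2*n)) where
  r i j := (i : ℕ) / 2 = (j : ℕ) / 2
  iseqv := ⟨fun _ => rfl, Eq.symm, Eq.trans⟩

/-- The labels-to-heights permutation s_n (0-indexed). -/
noncomputable def sPerm (n : ℕ) : Equiv.Perm (Fin (2*n)) :=
  Equiv.ofBijective
    (fun i => if h : (i : ℕ) < n then ⟨2*i, by have := i.2; omega⟩
              else ⟨4*n - 2*i - 1, by have := i.2; omega⟩)
    (by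
      rw [Fintype.bijective_iff_injective_and_card]
      refine ⟨?_, rfl⟩
      intro i j hij
      have hi := i.2; have hj := j.2
      apply Fin.ext
      simp only [] at hij
      split_ifs at hij <;> simp only [Fin.mk.injEq] at hij <;> omega)

/-- Blockwise action of a permutation on a partition. -/
def permAct {m : ℕ} (s : Equiv.Perm (Fin m)) (π : Setoid (Fin m)) : Setoid (Fin m) :=
  Setoid.comap s.symm π

/-- The map Φ_n : pair-partitions → tuples in {1,*}^{2n} (true = "1", false = "*"):
a point is `true` iff it is the minimum of its block of s_n · π. -/
noncomputable def PhiMap (n : ℕ) (π : Setoid (Fin (2*n))) : Fin (2*n) → Bool :=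
  fun i => @decide (∀ j, (permAct (sPerm n) π).r i j → i ≤ j) (Classical.propDecidable _)

/-- Number of positions i < h with ε i = b. -/
noncomputable def countVal {m : ℕ} (ε : Fin m → Bool) (b : Bool) (h : ℕ) : ℕ :=
  Nat.card {i : Fin m // (i : ℕ) < h ∧ ε i = b}

/-- The Dyck property for a tuple ε : {1,...,2n} → {1,*} (true = "1", false = "*"). -/
def IsDyck {n : ℕ} (ε : Fin (2*n) → Bool) : Prop :=
  (∀ h : ℕ, h ≤ 2*n → countVal ε false h ≤ countVal ε true h) ∧
  countVal ε true (2*n) = n ∧ countVal ε false (2*n) = n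

/-- The choice number Choice_ε(h). -/
noncomputable def choiceNum {n : ℕ} (ε : Fin (2*n) → Bool) (h : Fin (2*n)) : ℕ :=
  countVal ε true (h : ℕ) - countVal ε false (h : ℕ)

/-- Position of the point of height `k` in the enumeration order of candidate partners
for the `*`-decorated point of height `h`: following the boundary of the rectangle
from the point of height `h` towards the top (clockwise on the left side,
counterclockwise on the right side).  Expressed via labels p = s_n⁻¹(h), ℓ = s_n⁻¹(k). -/
noncomputable def orderKey (n : ℕ) (h k : Fin (2*n)) : ℕ :=
  let p : ℕ := ((sPerm n).symm h : ℕ)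
  let l : ℕ := ((sPerm n).symm k : ℕ)
  if p < n then (p + 2*n - l) % (2*n) else (l + 2*n - p) % (2*n)

/-- The choice parameter γ_h of a pair-partition π ∈ Φ_n⁻¹(ε) at a `*`-decorated
height h: the rank of the partner of h among the candidates that are still available
at the step of the pairing procedure visiting h (1-decorated, of smaller height, and
whose own partner has height ≥ h), in the enumeration order `orderKey`.  This is
exactly the parameter governing the standard pairing procedure. -/
noncomputable def gammaOf (n : ℕ) (π : Setoid (Fin (2*n))) (h : Fin (2*n)) : ℕ :=
  Nat.card {k : Fin (2*n) //
    PhiMap n π k = true ∧ k < h ∧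
    (∀ j, (permAct (sPerm n) π).r k j → j = k ∨ h ≤ j) ∧
    (∀ j, (permAct (sPerm n) π).r h j → j = h ∨ orderKey n h k ≤ orderKey n h j)}


section Stmt8Aux

/-- label height -/
def htv (n l : ℕ) : ℕ := if l < n then 2*l else 4*n - 2*l - 1
/-- key in label coordinates -/
def keyv (n p l : ℕ) : ℕ := if p < n then (p + 2*n - l) % (2*n) else (l + 2*n - p) % (2*n)

lemma keyv_eq (n p l : ℕ) (hp : p < 2*n) (hl : l < 2*n) :
    keyv n p l = if p < n then (if l ≤ p then p - l else p + 2*n - l)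
      else (if p ≤ l then l - p else l + 2*n - p) := by
  unfold keyv
  split_ifs with h1 h2 h3
  · have : p + 2*n - l = (p - l) + 2*n := by omega
    rw [this, Nat.add_mod_right, Nat.mod_eq_of_lt (by omega)]
  · exact Nat.mod_eq_of_lt (by omega)
  · have : l + 2*n - p = (l - p) + 2*n := by omega
    rw [this, Nat.add_mod_right, Nat.mod_eq_of_lt (by omega)]
  · exact Nat.mod_eq_of_lt (by omega)

lemma keyv_inj (n p a b : ℕ) (hp : p < 2*n) (ha : a < 2*n) (hb : b < 2*n)
    (h : keyv n p a = keyv n p b) : a = b := by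
  rw [keyv_eq n p a hp ha, keyv_eq n p b hp hb] at h
  split_ifs at h <;> omega

lemma htv_inj (n a b : ℕ) (ha : a < 2*n) (hb : b < 2*n) (h : htv n a = htv n b) : a = b := by
  unfold htv at h; split_ifs at h <;> omega

lemma core_lemma (n p u q v : ℕ) (hp : p < 2*n) (hu : u < 2*n) (hq : q < 2*n) (hv : v < 2*n)
    (dpu : p ≠ u) (dpq : p ≠ q) (dpv : p ≠ v) (duq : u ≠ q) (duv : u ≠ v) (dqv : q ≠ v)
    (h1 : htv n u < htv n p) (h2 : htv n q < htv n p) (h3 : htv n p < htv n v) :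
    (keyv n p q < keyv n p u ↔
      ((min p u < q ∧ q < max p u) ↔ ¬(min p u < v ∧ v < max p u))) := by
  rw [keyv_eq n p q hp hq, keyv_eq n p u hp hu]
  unfold htv at h1 h2 h3
  split_ifs at * <;> omega

lemma claimA (n p u q v : ℕ) (hp : p < 2*n) (hu : u < 2*n) (hq : q < 2*n) (hv : v < 2*n)
    (dpu : p ≠ u) (dpq : p ≠ q) (dpv : p ≠ v) (duq : u ≠ q) (duv : u ≠ v) (dqv : q ≠ v)
    (h1 : htv n u < htv n p) (h2 : htv n p < htv n q) (h3 : htv n q < htv n v) :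
    ¬((min p u < q ∧ q < max p u) ↔ ¬(min p u < v ∧ v < max p u)) := by
  unfold htv at h1 h2 h3
  split_ifs at * <;> omega

lemma sPerm_val (n : ℕ) (i : Fin (2*n)) : ((sPerm n i : Fin (2*n)) : ℕ) = htv n i := by
  by_cases h : (i : ℕ) < n <;> simp [sPerm, Equiv.ofBijective, htv, h]

lemma exists_partner {m : ℕ} (π : Setoid (Fin m)) (hπ : IsPairPartition π) :
    ∀ i, ∃ j, j ≠ i ∧ ∀ x, π.r i x ↔ (x = i ∨ x = j) := by
  intro i
  have hc : (Finset.univ.filter (fun j => π.r i j)).card = 2 := by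
    rw [← Fintype.card_subtype, ← Nat.card_eq_fintype_card]; exact hπ i
  obtain ⟨a, b, hab, hs⟩ := Finset.card_eq_two.mp hc
  have hmem : ∀ x, π.r i x ↔ (x = a ∨ x = b) := by
    intro x
    have := Finset.ext_iff.mp hs x
    simpa using this
  have hi : i = a ∨ i = b := (hmem i).mp (π.iseqv.refl i)
  rcases hi with rfl | rfl
  · exact ⟨b, fun h => hab h.symm, hmem⟩
  · exact ⟨a, fun h => hab h, fun x => by rw [hmem x]; tauto⟩

/-- the label-level map from `(star height, candidate height)` pairs to crossings -/
noncomputable def phiMap2 (n : ℕ) (f : Fin (2*n) → Fin (2*n)) (hk : Fin (2*n) × Fin (2*n)) :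
    Fin (2*n) × Fin (2*n) :=
  if (((if (((sPerm n).symm hk.1 : Fin (2*n)) : ℕ) < ((f ((sPerm n).symm hk.1) : Fin (2*n)) : ℕ)
        then (sPerm n).symm hk.1 else f ((sPerm n).symm hk.1)) : Fin (2*n)) : ℕ) <
     (((if (((sPerm n).symm hk.2 : Fin (2*n)) : ℕ) < ((f ((sPerm n).symm hk.2) : Fin (2*n)) : ℕ)
        then (sPerm n).symm hk.2 else f ((sPerm n).symm hk.2)) : Fin (2*n)) : ℕ)
  then ((if (((sPerm n).symm hk.1 : Fin (2*n)) : ℕ) < ((f ((sPerm n).symm hk.1) : Fin (2*n)) : ℕ)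
        then (sPerm n).symm hk.1 else f ((sPerm n).symm hk.1)),
        (if (((sPerm n).symm hk.2 : Fin (2*n)) : ℕ) < ((f ((sPerm n).symm hk.2) : Fin (2*n)) : ℕ)
        then (sPerm n).symm hk.2 else f ((sPerm n).symm hk.2)))
  else ((if (((sPerm n).symm hk.2 : Fin (2*n)) : ℕ) < ((f ((sPerm n).symm hk.2) : Fin (2*n)) : ℕ)
        then (sPerm n).symm hk.2 else f ((sPerm n).symm hk.2)),
        (if (((sPerm n).symm hk.1 : Fin (2*n)) : ℕ) < ((f ((sPerm n).symm hk.1) : Fin (2*n)) : ℕ)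
        then (sPerm n).symm hk.1 else f ((sPerm n).symm hk.1)))

/-- the inverse map from crossings to `(star height, candidate height)` pairs -/
noncomputable def psiMap2 (n : ℕ) (f : Fin (2*n) → Fin (2*n)) (ab : Fin (2*n) × Fin (2*n)) :
    Fin (2*n) × Fin (2*n) :=
  if htv n ((if htv n (ab.1 : ℕ) < htv n ((f ab.1 : Fin (2*n)) : ℕ) then f ab.1 else ab.1 : Fin (2*n)) : ℕ) <
     htv n ((if htv n (ab.2 : ℕ) < htv n ((f ab.2 : Fin (2*n)) : ℕ) then f ab.2 else ab.2 : Fin (2*n)) : ℕ)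
  then (sPerm n (if htv n (ab.1 : ℕ) < htv n ((f ab.1 : Fin (2*n)) : ℕ) then f ab.1 else ab.1),
        sPerm n (if htv n (ab.2 : ℕ) < htv n ((f ab.2 : Fin (2*n)) : ℕ) then ab.2 else f ab.2))
  else (sPerm n (if htv n (ab.2 : ℕ) < htv n ((f ab.2 : Fin (2*n)) : ℕ) then f ab.2 else ab.2),
        sPerm n (if htv n (ab.1 : ℕ) < htv n ((f ab.1 : Fin (2*n)) : ℕ) then ab.1 else f ab.1))

lemma straddle_key (n : ℕ) (pP uP qP vP : Fin (2*n))
    (d1 : pP ≠ uP) (d2 : qP ≠ vP)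
    (e1 : uP = qP → pP = vP) (e2 : uP = vP → pP = qP) (e3 : pP = qP → uP = vP)
    (h1 : htv n (uP : ℕ) < htv n (pP : ℕ)) (h2 : htv n (qP : ℕ) < htv n (vP : ℕ))
    (h3 : htv n (pP : ℕ) < htv n (vP : ℕ))
    (hEO : ((min (pP : ℕ) (uP : ℕ) < (qP : ℕ) ∧ (qP : ℕ) < max (pP : ℕ) (uP : ℕ)) ↔
      ¬(min (pP : ℕ) (uP : ℕ) < (vP : ℕ) ∧ (vP : ℕ) < max (pP : ℕ) (uP : ℕ)))) :
    htv n (qP : ℕ) < htv n (pP : ℕ) ∧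
      keyv n (pP : ℕ) (qP : ℕ) < keyv n (pP : ℕ) (uP : ℕ) := by
  have vne : ∀ x y : Fin (2*n), x ≠ y → (x : ℕ) ≠ (y : ℕ) :=
    fun x y hxy e => hxy (Fin.val_injective e)
  have dpu : (pP : ℕ) ≠ (uP : ℕ) := vne _ _ d1
  have dqv : (qP : ℕ) ≠ (vP : ℕ) := vne _ _ d2
  have dpv : (pP : ℕ) ≠ (vP : ℕ) := by
    intro e; rw [e] at h3; exact lt_irrefl _ h3
  have dpq : (pP : ℕ) ≠ (qP : ℕ) := by
    intro e
    have huv : uP = vP := e3 (Fin.val_injective e)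
    rw [congrArg (Fin.val) huv] at h1
    rw [e] at h1
    omega
  have duq : (uP : ℕ) ≠ (qP : ℕ) := by
    intro e
    have hpv : pP = vP := e1 (Fin.val_injective e)
    exact dpv (congrArg Fin.val hpv)
  have duv : (uP : ℕ) ≠ (vP : ℕ) := by
    intro e
    have hpq : pP = qP := e2 (Fin.val_injective e)
    exact dpq (congrArg Fin.val hpq)
  have hqp : htv n (qP : ℕ) ≠ htv n (pP : ℕ) :=
    fun e => dpq ((htv_inj n _ _ qP.is_lt pP.is_lt e)).symm
  have hst : htv n (qP : ℕ) < htv n (pP : ℕ) := by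
    by_contra hcon
    have h2' : htv n (pP : ℕ) < htv n (qP : ℕ) := by omega
    exact claimA n (pP : ℕ) (uP : ℕ) (qP : ℕ) (vP : ℕ) pP.is_lt uP.is_lt qP.is_lt vP.is_lt
      dpu dpq dpv duq duv dqv h1 h2' h2 hEO
  exact ⟨hst, (core_lemma n (pP : ℕ) (uP : ℕ) (qP : ℕ) (vP : ℕ) pP.is_lt uP.is_lt qP.is_lt
      vP.is_lt dpu dpq dpv duq duv dqv h1 hst h3).mpr hEO⟩

lemma phi_mem (n : ℕ) (f : Fin (2*n) → Fin (2*n)) (hinv : ∀ i, f (f i) = i)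
    (hfne : ∀ i, f i ≠ i) (hk : Fin (2*n) × Fin (2*n))
    (c1 : htv n ((f ((sPerm n).symm hk.1) : Fin (2*n)) : ℕ) <
          htv n (((sPerm n).symm hk.1 : Fin (2*n)) : ℕ))
    (c2 : htv n (((sPerm n).symm hk.2 : Fin (2*n)) : ℕ) <
          htv n ((f ((sPerm n).symm hk.2) : Fin (2*n)) : ℕ))
    (c3 : htv n (((sPerm n).symm hk.2 : Fin (2*n)) : ℕ) <
          htv n (((sPerm n).symm hk.1 : Fin (2*n)) : ℕ))
    (c4 : htv n (((sPerm n).symm hk.1 : Fin (2*n)) : ℕ) <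
          htv n ((f ((sPerm n).symm hk.2) : Fin (2*n)) : ℕ))
    (c5 : keyv n (((sPerm n).symm hk.1 : Fin (2*n)) : ℕ) (((sPerm n).symm hk.2 : Fin (2*n)) : ℕ) <
          keyv n (((sPerm n).symm hk.1 : Fin (2*n)) : ℕ) ((f ((sPerm n).symm hk.1) : Fin (2*n)) : ℕ)) :
    (phiMap2 n f hk).1 < (phiMap2 n f hk).2 ∧ (phiMap2 n f hk).2 < f (phiMap2 n f hk).1 ∧
      f (phiMap2 n f hk).1 < f (phiMap2 n f hk).2 := by
  unfold phiMap2
  set p : Fin (2*n) := (sPerm n).symm hk.1 with hp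
  set q : Fin (2*n) := (sPerm n).symm hk.2 with hq
  have dpu : (p : ℕ) ≠ ((f p) : ℕ) := fun e => hfne p (Fin.val_injective e).symm
  have dqv : (q : ℕ) ≠ ((f q) : ℕ) := fun e => hfne q (Fin.val_injective e).symm
  have dpq : (p : ℕ) ≠ (q : ℕ) := by intro e; rw [e] at c3; exact lt_irrefl _ c3
  have dpv : (p : ℕ) ≠ ((f q) : ℕ) := by intro e; rw [e] at c4; exact lt_irrefl _ c4
  have duq : ((f p) : ℕ) ≠ (q : ℕ) := by
    intro e
    have h' : f p = q := Fin.val_injective e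
    have h'' : p = f q := by rw [← h', hinv]
    rw [h''] at c4; exact lt_irrefl _ c4
  have duv : ((f p) : ℕ) ≠ ((f q) : ℕ) := by
    intro e
    have h' : f p = f q := Fin.val_injective e
    have h'' : p = q := by rw [← hinv p, h', hinv]
    exact dpq (congrArg Fin.val h'')
  have EO := (core_lemma n (p : ℕ) ((f p) : ℕ) (q : ℕ) ((f q) : ℕ) p.is_lt (f p).is_lt q.is_lt
    (f q).is_lt dpu dpq dpv duq duv dqv c1 c3 c4).mp c5
  split_ifs <;>
    (dsimp only; try simp only [hinv]) <;>
    (refine ⟨?_, ?_, ?_⟩ <;> (rw [Fin.lt_def]; omega))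

lemma psi_mem (n : ℕ) (f : Fin (2*n) → Fin (2*n)) (hinv : ∀ i, f (f i) = i)
    (hfne : ∀ i, f i ≠ i) (a b : Fin (2*n)) (g1 : a < b) (g2 : b < f a) (g3 : f a < f b) :
    sPerm n (f ((sPerm n).symm (psiMap2 n f (a, b)).1)) < (psiMap2 n f (a, b)).1 ∧
    (psiMap2 n f (a, b)).2 < sPerm n (f ((sPerm n).symm (psiMap2 n f (a, b)).2)) ∧
    (psiMap2 n f (a, b)).2 < (psiMap2 n f (a, b)).1 ∧
    (psiMap2 n f (a, b)).1 < sPerm n (f ((sPerm n).symm (psiMap2 n f (a, b)).2)) ∧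
    keyv n (((sPerm n).symm (psiMap2 n f (a, b)).1 : Fin (2*n)) : ℕ)
        (((sPerm n).symm (psiMap2 n f (a, b)).2 : Fin (2*n)) : ℕ) <
      keyv n (((sPerm n).symm (psiMap2 n f (a, b)).1 : Fin (2*n)) : ℕ)
        ((f ((sPerm n).symm (psiMap2 n f (a, b)).1) : Fin (2*n)) : ℕ) := by
  have n1 : (a : ℕ) < (b : ℕ) := g1
  have n2 : (b : ℕ) < ((f a) : ℕ) := g2
  have n3 : ((f a) : ℕ) < ((f b) : ℕ) := g3
  have hne : ∀ x y : Fin (2*n), (x : ℕ) ≠ (y : ℕ) → htv n (x : ℕ) ≠ htv n (y : ℕ) :=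
    fun x y hxy e => hxy (htv_inj n _ _ x.is_lt y.is_lt e)
  have q1 : htv n (a : ℕ) ≠ htv n ((f a) : ℕ) := hne _ _ (by omega)
  have q2 : htv n (b : ℕ) ≠ htv n ((f b) : ℕ) := hne _ _ (by omega)
  have q3 : htv n ((f a) : ℕ) ≠ htv n ((f b) : ℕ) := hne _ _ (by omega)
  have q4 : htv n (a : ℕ) ≠ htv n ((f b) : ℕ) := hne _ _ (by omega)
  have q5 : htv n (a : ℕ) ≠ htv n (b : ℕ) := hne _ _ (by omega)
  have q6 : htv n (b : ℕ) ≠ htv n ((f a) : ℕ) := hne _ _ (by omega)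
  unfold psiMap2
  dsimp only
  split_ifs <;>
    simp only [Equiv.symm_apply_apply, hinv, Fin.lt_def, sPerm_val]
  all_goals first
    | (obtain ⟨hst, hkey⟩ := straddle_key n (f a) a b (f b) (hfne a) (Ne.symm (hfne b)) (fun e => by rw [e]) (fun e => by rw [e, hinv]) (fun e => by rw [← e, hinv]) (by omega) (by omega) (by omega) (by omega); exact ⟨by omega, by omega, by omega, by omega, hkey⟩)
    | (obtain ⟨hst, hkey⟩ := straddle_key n (f b) b a (f a) (hfne b) (Ne.symm (hfne a)) (fun e => by rw [e]) (fun e => by rw [e, hinv]) (fun e => by rw [← e, hinv]) (by omega) (by omega) (by omega) (by omega); exact ⟨by omega, by omega, by omega, by omega, hkey⟩)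
    | (obtain ⟨hst, hkey⟩ := straddle_key n (f a) a (f b) b (hfne a) (hfne b) (fun e => by rw [e, hinv]) (fun e => by rw [e]) (fun e => by rw [← hinv a, e, hinv]) (by omega) (by omega) (by omega) (by omega); exact ⟨by omega, by omega, by omega, by omega, hkey⟩)
    | (obtain ⟨hst, hkey⟩ := straddle_key n b (f b) a (f a) (Ne.symm (hfne b)) (Ne.symm (hfne a)) (fun e => by rw [← e, hinv]) (fun e => by rw [← hinv b, e, hinv]) (fun e => by rw [e]) (by omega) (by omega) (by omega) (by omega); exact ⟨by omega, by omega, by omega, by omega, hkey⟩)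
    | (obtain ⟨hst, hkey⟩ := straddle_key n a (f a) b (f b) (Ne.symm (hfne a)) (Ne.symm (hfne b)) (fun e => by rw [← e, hinv]) (fun e => by rw [← hinv a, e, hinv]) (fun e => by rw [e]) (by omega) (by omega) (by omega) (by omega); exact ⟨by omega, by omega, by omega, by omega, hkey⟩)
    | (obtain ⟨hst, hkey⟩ := straddle_key n (f b) b (f a) a (hfne b) (hfne a) (fun e => by rw [e, hinv]) (fun e => by rw [e]) (fun e => by rw [← hinv b, e, hinv]) (by omega) (by omega) (by omega) (by omega); exact ⟨by omega, by omega, by omega, by omega, hkey⟩)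
    | (obtain ⟨hst, hkey⟩ := straddle_key n a (f a) (f b) b (Ne.symm (hfne a)) (hfne b) (fun e => by rw [← hinv a, e, hinv]) (fun e => by rw [← e, hinv]) (fun e => by rw [e, hinv]) (by omega) (by omega) (by omega) (by omega); exact ⟨by omega, by omega, by omega, by omega, hkey⟩)
    | (obtain ⟨hst, hkey⟩ := straddle_key n b (f b) (f a) a (Ne.symm (hfne b)) (hfne a) (fun e => by rw [← hinv b, e, hinv]) (fun e => by rw [← e, hinv]) (fun e => by rw [e, hinv]) (by omega) (by omega) (by omega) (by omega); exact ⟨by omega, by omega, by omega, by omega, hkey⟩)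

lemma psi_phi (n : ℕ) (f : Fin (2*n) → Fin (2*n)) (hinv : ∀ i, f (f i) = i)
    (hfne : ∀ i, f i ≠ i) (hk : Fin (2*n) × Fin (2*n))
    (c1 : htv n ((f ((sPerm n).symm hk.1) : Fin (2*n)) : ℕ) <
          htv n (((sPerm n).symm hk.1 : Fin (2*n)) : ℕ))
    (c2 : htv n (((sPerm n).symm hk.2 : Fin (2*n)) : ℕ) <
          htv n ((f ((sPerm n).symm hk.2) : Fin (2*n)) : ℕ))
    (c3 : htv n (((sPerm n).symm hk.2 : Fin (2*n)) : ℕ) <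
          htv n (((sPerm n).symm hk.1 : Fin (2*n)) : ℕ))
    (c4 : htv n (((sPerm n).symm hk.1 : Fin (2*n)) : ℕ) <
          htv n ((f ((sPerm n).symm hk.2) : Fin (2*n)) : ℕ)) :
    psiMap2 n f (phiMap2 n f hk) = hk := by
  unfold phiMap2 psiMap2
  split_ifs
  all_goals simp only [hinv, Equiv.symm_apply_apply, Equiv.apply_symm_apply, Prod.mk.eta] at *
  all_goals first | rfl | (exfalso; omega)

lemma phi_psi (n : ℕ) (f : Fin (2*n) → Fin (2*n)) (hinv : ∀ i, f (f i) = i)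
    (hfne : ∀ i, f i ≠ i) (a b : Fin (2*n)) (g1 : a < b) (g2 : b < f a) (g3 : f a < f b) :
    phiMap2 n f (psiMap2 n f (a, b)) = (a, b) := by
  have n1 : (a : ℕ) < (b : ℕ) := g1
  have n2 : (b : ℕ) < ((f a) : ℕ) := g2
  have n3 : ((f a) : ℕ) < ((f b) : ℕ) := g3
  unfold psiMap2 phiMap2
  dsimp only
  split_ifs
  all_goals simp only [hinv, Equiv.symm_apply_apply, Equiv.apply_symm_apply, Prod.mk.eta] at *
  all_goals first | rfl | (exfalso; omega)

end Stmt8Aux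

/-- for the pair-partition π ∈ Φ_n⁻¹(ε) parametrized by the choice
tuple (γ_h) (with 1 ≤ γ_h ≤ Choice_ε(h)), the number of crossings of π equals
Σ_{h ∈ ε⁻¹(*)} (γ_h − 1). -/
theorem stmt_8 (n : ℕ) (ε : Fin (2*n) → Bool) (hε : IsDyck ε)
    (π : Setoid (Fin (2*n))) (hπ : IsPairPartition π) (hΦ : PhiMap n π = ε)
    (γ : Fin (2*n) → ℕ)
    (hγ : ∀ h : Fin (2*n), ε h = false → γ h = gammaOf n π h)
    (hb : ∀ h : Fin (2*n), ε h = false → 1 ≤ γ h ∧ γ h ≤ choiceNum ε h) :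
    crossings π =
      ∑ h ∈ Finset.univ.filter (fun h : Fin (2*n) => ε h = false), (γ h - 1) := by
  classical
  choose f hfne hfr using exists_partner π hπ
  have hinv : ∀ i, f (f i) = i := by
    intro i
    have h2 : π.r (f i) i := π.iseqv.symm ((hfr i (f i)).mpr (Or.inr rfl))
    rcases (hfr (f i) i).mp h2 with h | h
    · exact absurd h.symm (hfne i)
    · exact h.symm
  set F : Fin (2*n) → Fin (2*n) := fun h => sPerm n (f ((sPerm n).symm h)) with hFdef
  have hσ : ∀ a b : Fin (2*n), (permAct (sPerm n) π).r a b ↔ (b = a ∨ b = F a) := by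
    intro a b
    have h0 : (permAct (sPerm n) π).r a b ↔ π.r ((sPerm n).symm a) ((sPerm n).symm b) := Iff.rfl
    rw [h0, hfr]
    constructor
    · rintro (h | h)
      · exact Or.inl ((sPerm n).symm.injective h)
      · right
        have := congrArg (sPerm n) h
        rwa [Equiv.apply_symm_apply] at this
    · rintro (rfl | rfl)
      · exact Or.inl rfl
      · right; simp [hFdef]
  have hFinv : ∀ h, F (F h) = h := by
    intro h; simp [hFdef, hinv]
  have hFne : ∀ h, F h ≠ h := by
    intro h he
    apply hfne ((sPerm n).symm h)
    have := congrArg (sPerm n).symm he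
    simpa [hFdef] using this
  have hsymmF : ∀ x, (sPerm n).symm (F x) = f ((sPerm n).symm x) := by
    intro x; simp [hFdef]
  have hεt : ∀ h, ε h = true ↔ h < F h := by
    intro h
    rw [← hΦ]
    simp only [PhiMap]
    have hdec : ∀ (p : Prop) (inst : Decidable p), (@decide p inst = true) ↔ p :=
      fun p inst => ⟨fun x => of_decide_eq_true x, fun x => decide_eq_true x⟩
    rw [hdec]
    constructor
    · intro hall
      exact lt_of_le_of_ne (hall (F h) ((hσ h (F h)).mpr (Or.inr rfl))) (Ne.symm (hFne h))
    · intro hlt j hj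
      rcases (hσ h j).mp hj with rfl | rfl
      · exact le_refl _
      · exact le_of_lt hlt
  have hεf : ∀ h, ε h = false ↔ F h < h := by
    intro h
    have h1 : ε h = false ↔ ¬ (ε h = true) := by cases (ε h) <;> simp
    rw [h1, hεt]
    constructor
    · intro hn; exact lt_of_le_of_ne (le_of_not_gt hn) (hFne h)
    · intro hlt; exact lt_asymm hlt
  have hOK : ∀ h k : Fin (2*n), orderKey n h k =
      keyv n (((sPerm n).symm h : Fin (2*n)) : ℕ) (((sPerm n).symm k : Fin (2*n)) : ℕ) :=
    fun _ _ => rfl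
  have hkeyinj : ∀ h k k' : Fin (2*n), orderKey n h k = orderKey n h k' → k = k' := by
    intro h k k' he
    rw [hOK, hOK] at he
    have := keyv_inj n _ _ _ (Fin.is_lt _) (Fin.is_lt _) (Fin.is_lt _) he
    exact (sPerm n).symm.injective (Fin.ext this)
  have hval : ∀ h : Fin (2*n), (h : ℕ) = htv n (((sPerm n).symm h : Fin (2*n)) : ℕ) := by
    intro h
    conv_lhs => rw [← Equiv.apply_symm_apply (sPerm n) h]
    rw [sPerm_val]
  -- step 1 : crossings as label pairs
  have hc2 : ∀ (a c : Fin (2*n)), π.r a c → a < c → c = f a := by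
    intro a c h hlt
    rcases (hfr a c).mp h with h' | h'
    · exact absurd h' (ne_of_gt hlt)
    · exact h'
  have hcross : crossings π = (Finset.univ.filter (fun ab : Fin (2*n) × Fin (2*n) =>
      ab.1 < ab.2 ∧ ab.2 < f ab.1 ∧ f ab.1 < f ab.2)).card := by
    have e : {t : Fin (2*n) × Fin (2*n) × Fin (2*n) × Fin (2*n) //
        t.1 < t.2.1 ∧ t.2.1 < t.2.2.1 ∧ t.2.2.1 < t.2.2.2 ∧
        π.r t.1 t.2.2.1 ∧ π.r t.2.1 t.2.2.2 ∧ ¬ π.r t.1 t.2.1} ≃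
        {ab : Fin (2*n) × Fin (2*n) // ab.1 < ab.2 ∧ ab.2 < f ab.1 ∧ f ab.1 < f ab.2} := by
      refine ⟨fun t => ⟨(t.1.1, t.1.2.1), ?_⟩,
        fun ab => ⟨(ab.1.1, ab.1.2, f ab.1.1, f ab.1.2), ?_⟩, ?_, ?_⟩
      · obtain ⟨⟨a, b, c, d⟩, h1, h2, h3, h4, h5, h6⟩ := t
        have hc : c = f a := hc2 a c h4 (h1.trans h2)
        have hd : d = f b := hc2 b d h5 (h2.trans h3)
        exact ⟨h1, hc ▸ h2, by rw [← hc, ← hd]; exact h3⟩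
      · obtain ⟨⟨a, b⟩, g1, g2, g3⟩ := ab
        refine ⟨g1, g2, g3, (hfr a (f a)).mpr (Or.inr rfl), (hfr b (f b)).mpr (Or.inr rfl), ?_⟩
        intro hr
        rcases (hfr a b).mp hr with h' | h'
        · exact absurd h' (ne_of_gt g1)
        · exact absurd h' (ne_of_lt g2)
      · rintro ⟨⟨a, b, c, d⟩, h1, h2, h3, h4, h5, h6⟩
        have hc : c = f a := hc2 a c h4 (h1.trans h2)
        have hd : d = f b := hc2 b d h5 (h2.trans h3)
        simp only [Subtype.mk.injEq, Prod.mk.injEq]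
        exact ⟨trivial, trivial, hc.symm, hd.symm⟩
      · rintro ⟨⟨a, b⟩, g⟩; rfl
    unfold crossings
    rw [Nat.card_congr e, Nat.card_eq_fintype_card, Fintype.card_subtype]
  -- step 2 : gamma as a card
  have hγstep : ∀ h : Fin (2*n), ε h = false →
      γ h - 1 = (Finset.univ.filter (fun k : Fin (2*n) =>
        k < F k ∧ k < h ∧ h < F k ∧ orderKey n h k < orderKey n h (F h))).card := by
    intro h hh
    have hFh : F h < h := (hεf h).mp hh
    have hset : (Finset.univ.filter (fun k : Fin (2*n) =>
        PhiMap n π k = true ∧ k < h ∧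
        (∀ j, (permAct (sPerm n) π).r k j → j = k ∨ h ≤ j) ∧
        (∀ j, (permAct (sPerm n) π).r h j → j = h ∨ orderKey n h k ≤ orderKey n h j))) =
        insert (F h) (Finset.univ.filter (fun k : Fin (2*n) =>
        k < F k ∧ k < h ∧ h < F k ∧ orderKey n h k < orderKey n h (F h))) := by
      ext k
      have hP1 : PhiMap n π k = true ↔ k < F k := by rw [hΦ]; exact hεt k
      have hP3 : (∀ j, (permAct (sPerm n) π).r k j → j = k ∨ h ≤ j) ↔ h ≤ F k := by
        constructor
        · intro hall
          rcases hall (F k) ((hσ k (F k)).mpr (Or.inr rfl)) with h' | h'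
          · exact absurd h' (hFne k)
          · exact h'
        · intro hle j hj
          rcases (hσ k j).mp hj with rfl | rfl
          · exact Or.inl rfl
          · exact Or.inr hle
      have hP4 : (∀ j, (permAct (sPerm n) π).r h j →
          j = h ∨ orderKey n h k ≤ orderKey n h j) ↔
          orderKey n h k ≤ orderKey n h (F h) := by
        constructor
        · intro hall
          rcases hall (F h) ((hσ h (F h)).mpr (Or.inr rfl)) with h' | h'
          · exact absurd h' (hFne h)
          · exact h'
        · intro hle j hj
          rcases (hσ h j).mp hj with rfl | rfl
          · exact Or.inl rfl
          · exact Or.inr hle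
      simp only [Finset.mem_filter, Finset.mem_univ, true_and, Finset.mem_insert,
        hP1, hP3, hP4]
      constructor
      · rintro ⟨c1, c2, c3, c4⟩
        by_cases hk : k = F h
        · exact Or.inl hk
        · right
          refine ⟨c1, c2, lt_of_le_of_ne c3 ?_, lt_of_le_of_ne c4 ?_⟩
          · intro he; exact hk (by rw [he, hFinv])
          · intro he; exact hk (hkeyinj h k (F h) he)
      · rintro (rfl | ⟨c1, c2, c3, c4⟩)
        · exact ⟨by rw [hFinv]; exact hFh, hFh, (hFinv h).ge, le_refl _⟩
        · exact ⟨c1, c2, le_of_lt c3, le_of_lt c4⟩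
    have hnm : F h ∉ (Finset.univ.filter (fun k : Fin (2*n) =>
        k < F k ∧ k < h ∧ h < F k ∧ orderKey n h k < orderKey n h (F h))) := by
      intro hm
      exact lt_irrefl _ (Finset.mem_filter.mp hm).2.2.2.2
    rw [hγ h hh]
    unfold gammaOf
    rw [Nat.card_eq_fintype_card, Fintype.card_subtype, hset,
      Finset.card_insert_of_notMem hnm]
    omega
  -- step 3 : the sum as a card of pairs
  have hsum : ∑ h ∈ Finset.univ.filter (fun h : Fin (2*n) => ε h = false), (γ h - 1) =
      (Finset.univ.filter (fun hk : Fin (2*n) × Fin (2*n) =>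
        F hk.1 < hk.1 ∧ hk.2 < F hk.2 ∧ hk.2 < hk.1 ∧ hk.1 < F hk.2 ∧
        orderKey n hk.1 hk.2 < orderKey n hk.1 (F hk.1))).card := by
    rw [Finset.card_eq_sum_card_fiberwise (f := Prod.fst)
      (t := Finset.univ.filter (fun h : Fin (2*n) => ε h = false))
      (fun x hx => by
        simp only [Finset.mem_coe, Finset.mem_filter, Finset.mem_univ, true_and] at hx ⊢
        exact (hεf x.1).mpr hx.1)]
    apply Finset.sum_congr rfl
    intro h hh
    have hh' : ε h = false := (Finset.mem_filter.mp hh).2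
    have hFh : F h < h := (hεf h).mp hh'
    rw [hγstep h hh']
    apply Finset.card_bij (fun k _ => ((h, k) : Fin (2*n) × Fin (2*n)))
    · intro k hk
      simp only [Finset.mem_filter, Finset.mem_univ, true_and] at hk ⊢
      obtain ⟨b1, b2, b3, b4⟩ := hk
      exact ⟨⟨hFh, b1, b2, b3, b4⟩, trivial⟩
    · intro k1 h1 k2 h2 he
      exact congrArg Prod.snd he
    · intro x hx
      simp only [Finset.mem_filter, Finset.mem_univ, true_and] at hx
      obtain ⟨⟨p1, p2, p3, p4, p5⟩, p6⟩ := hx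
      refine ⟨x.2, ?_, ?_⟩
      · simp only [Finset.mem_filter, Finset.mem_univ, true_and]
        rw [← p6]
        exact ⟨p2, p3, p4, p5⟩
      · rw [← p6]
  -- step 4 : the big bijection
  have mkc : ∀ hk : Fin (2*n) × Fin (2*n),
      F hk.1 < hk.1 → hk.2 < F hk.2 → hk.2 < hk.1 → hk.1 < F hk.2 →
      (htv n ((f ((sPerm n).symm hk.1) : Fin (2*n)) : ℕ) <
          htv n (((sPerm n).symm hk.1 : Fin (2*n)) : ℕ)) ∧
      (htv n (((sPerm n).symm hk.2 : Fin (2*n)) : ℕ) <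
          htv n ((f ((sPerm n).symm hk.2) : Fin (2*n)) : ℕ)) ∧
      (htv n (((sPerm n).symm hk.2 : Fin (2*n)) : ℕ) <
          htv n (((sPerm n).symm hk.1 : Fin (2*n)) : ℕ)) ∧
      (htv n (((sPerm n).symm hk.1 : Fin (2*n)) : ℕ) <
          htv n ((f ((sPerm n).symm hk.2) : Fin (2*n)) : ℕ)) := by
    intro hk m1 m2 m3 m4
    refine ⟨?_, ?_, ?_, ?_⟩
    · have t := Fin.lt_def.mp m1
      rw [hval hk.1] at t
      simpa only [hFdef, sPerm_val] using t
    · have t := Fin.lt_def.mp m2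
      rw [hval hk.2] at t
      simpa only [hFdef, sPerm_val] using t
    · have t := Fin.lt_def.mp m3
      rw [hval hk.1, hval hk.2] at t
      exact t
    · have t := Fin.lt_def.mp m4
      rw [hval hk.1] at t
      simpa only [hFdef, sPerm_val] using t
  have hbij : (Finset.univ.filter (fun hk : Fin (2*n) × Fin (2*n) =>
        F hk.1 < hk.1 ∧ hk.2 < F hk.2 ∧ hk.2 < hk.1 ∧ hk.1 < F hk.2 ∧
        orderKey n hk.1 hk.2 < orderKey n hk.1 (F hk.1))).card =
      (Finset.univ.filter (fun ab : Fin (2*n) × Fin (2*n) =>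
        ab.1 < ab.2 ∧ ab.2 < f ab.1 ∧ f ab.1 < f ab.2)).card := by
    apply Finset.card_nbij' (i := phiMap2 n f) (j := psiMap2 n f)
    · intro hk hm
      simp only [Finset.mem_coe, Finset.mem_filter, Finset.mem_univ, true_and] at hm ⊢
      obtain ⟨m1, m2, m3, m4, m5⟩ := hm
      obtain ⟨c1, c2, c3, c4⟩ := mkc hk m1 m2 m3 m4
      have c5 : keyv n (((sPerm n).symm hk.1 : Fin (2*n)) : ℕ)
          (((sPerm n).symm hk.2 : Fin (2*n)) : ℕ) <
          keyv n (((sPerm n).symm hk.1 : Fin (2*n)) : ℕ)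
          ((f ((sPerm n).symm hk.1) : Fin (2*n)) : ℕ) := by
        have t := m5
        rw [hOK, hOK, hsymmF] at t
        exact t
      exact phi_mem n f hinv hfne hk c1 c2 c3 c4 c5
    · intro ab hm
      simp only [Finset.mem_coe, Finset.mem_filter, Finset.mem_univ, true_and] at hm ⊢
      obtain ⟨g1, g2, g3⟩ := hm
      have H := psi_mem n f hinv hfne ab.1 ab.2 g1 g2 g3
      rw [Prod.mk.eta] at H
      refine ⟨?_, ?_, ?_, ?_, ?_⟩
      · simp only [hFdef]; exact H.1
      · simp only [hFdef]; exact H.2.1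
      · exact H.2.2.1
      · simp only [hFdef]; exact H.2.2.2.1
      · rw [hOK, hOK, hsymmF]
        exact H.2.2.2.2
    · intro hk hm
      simp only [Finset.mem_coe, Finset.mem_filter, Finset.mem_univ, true_and] at hm
      obtain ⟨m1, m2, m3, m4, m5⟩ := hm
      obtain ⟨c1, c2, c3, c4⟩ := mkc hk m1 m2 m3 m4
      exact psi_phi n f hinv hfne hk c1 c2 c3 c4
    · intro ab hm
      simp only [Finset.mem_coe, Finset.mem_filter, Finset.mem_univ, true_and] at hm
      obtain ⟨g1, g2, g3⟩ := hm
      have := phi_psi n f hinv hfne ab.1 ab.2 g1 g2 g3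
      rwa [Prod.mk.eta] at this
  rw [hcross, hsum]
  exact hbij.symm
end

section
/- On the q-Fock space over ℂ^d, [L*(v), R(w)] = ⟨w,v⟩·Q and [L(v), R*(w)] = −⟨v,w⟩·Q for all v, w ∈ ℂ^d, where Q acts as q^n on (ℂ^d)^{⊗n} and fixes the vacuum. Moreover [L(v), R(w)] = 0 and [L*(v), R*(w)] = 0. -/
open scoped Classical

/-! ## The algebraic q-Fock space over ℂ^d
The algebraic direct sum ℂ ⊕ ⊕_{n≥1} (ℂ^d)^{⊗n} is identified with the free
ℂ-module on the set of words `List (Fin d)` (a word w is the basis tensor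
e_{w₁} ⊗ ... ⊗ e_{w_k}; the empty word is the vacuum vector). -/

abbrev FockB (d : ℕ) := List (Fin d) →₀ ℂ

/-- The vacuum vector. -/
noncomputable def fvac (d : ℕ) : FockB d := Finsupp.single [] 1

/-- Left creation operator L_i (prepend the basis vector e_i). -/
noncomputable def lCr (d : ℕ) (i : Fin d) : Module.End ℂ (FockB d) :=
  Finsupp.lmapDomain ℂ ℂ (fun w => i :: w)

/-- Right creation operator R_i (append the basis vector e_i). -/
noncomputable def rCr (d : ℕ) (i : Fin d) : Module.End ℂ (FockB d) :=
  Finsupp.lmapDomain ℂ ℂ (fun w => w ++ [i])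

/-- Left q-annihilation operator L_i* :
e_{w₁}⊗...⊗e_{w_k} ↦ Σ_j q^{j-1} ⟨e_{w_j}, e_i⟩ (tensor with j-th factor removed). -/
noncomputable def lAnn (d : ℕ) (q : ℂ) (i : Fin d) : Module.End ℂ (FockB d) :=
  Finsupp.lsum ℂ fun w => LinearMap.toSpanSingleton ℂ (FockB d)
    (∑ k ∈ Finset.range w.length,
      if w[k]? = some i then q ^ k • Finsupp.single (w.eraseIdx k) (1 : ℂ) else 0)

/-- Right q-annihilation operator R_i* (counting positions from the right). -/
noncomputable def rAnn (d : ℕ) (q : ℂ) (i : Fin d) : Module.End ℂ (FockB d) :=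
  Finsupp.lsum ℂ fun w => LinearMap.toSpanSingleton ℂ (FockB d)
    (∑ k ∈ Finset.range w.length,
      if w[w.length - 1 - k]? = some i then
        q ^ k • Finsupp.single (w.eraseIdx (w.length - 1 - k)) (1 : ℂ) else 0)

/-- The vacuum state φ_vac(X) = ⟨X ξ_vac, ξ_vac⟩ (= the coefficient of the empty
word in X ξ_vac). -/
noncomputable def vacState (d : ℕ) (X : Module.End ℂ (FockB d)) : ℂ :=
  (X (fvac d)) []

/-- The operator T_{d;q} = Σ_i (L_i + L_i*) (R_i + R_i*). -/
noncomputable def TOpQ (d : ℕ) (q : ℂ) : Module.End ℂ (FockB d) :=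
  ∑ i : Fin d, (lCr d i + lAnn d q i) * (rCr d i + rAnn d q i)

/-- Number of inversions of a permutation. -/
noncomputable def inversions {k : ℕ} (τ : Equiv.Perm (Fin k)) : ℕ :=
  Nat.card {p : Fin k × Fin k // p.1 < p.2 ∧ τ p.2 < τ p.1}

/-- The Bożejko–Speicher q-inner product of two basis words:
⟨e_{w₁}⊗...⊗e_{w_k}, e_{w'₁}⊗...⊗e_{w'_k}⟩_q = Σ_τ Π_j ⟨e_{w_j}, e_{w'_{τ(j)}}⟩ q^{ι(τ)}. -/
noncomputable def qIP (d : ℕ) (q : ℂ) (w w' : List (Fin d)) : ℂ :=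
  if h : w.length = w'.length then
    ∑ τ : Equiv.Perm (Fin w.length),
      (if ∀ j : Fin w.length, w.get j = w'.get (Fin.cast h (τ j))
       then q ^ inversions τ else 0)
  else 0

/-- The q-inner product on the algebraic q-Fock space (linear in the first variable). -/
noncomputable def qInnerF (d : ℕ) (q : ℂ) (x y : FockB d) : ℂ :=
  ∑ w ∈ x.support, ∑ w' ∈ y.support, x w * (starRingEnd ℂ) (y w') * qIP d q w w'

/-- Left creation operator L(v) for a general vector v ∈ ℂ^d. -/
noncomputable def lCrV (d : ℕ) (v : Fin d → ℂ) : Module.End ℂ (FockB d) :=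
  ∑ i : Fin d, v i • lCr d i

/-- Left q-annihilation operator L*(v) for a general vector v ∈ ℂ^d. -/
noncomputable def lAnnV (d : ℕ) (q : ℂ) (v : Fin d → ℂ) : Module.End ℂ (FockB d) :=
  ∑ i : Fin d, (starRingEnd ℂ) (v i) • lAnn d q i

/-- Right creation operator R(v) for a general vector v ∈ ℂ^d. -/
noncomputable def rCrV (d : ℕ) (v : Fin d → ℂ) : Module.End ℂ (FockB d) :=
  ∑ i : Fin d, v i • rCr d i

/-- Right q-annihilation operator R*(v) for a general vector v ∈ ℂ^d. -/
noncomputable def rAnnV (d : ℕ) (q : ℂ) (v : Fin d → ℂ) : Module.End ℂ (FockB d) :=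
  ∑ i : Fin d, (starRingEnd ℂ) (v i) • rAnn d q i

/-- The inner product of ℂ^d (linear in the first variable). -/
noncomputable def cInner (d : ℕ) (v w : Fin d → ℂ) : ℂ :=
  ∑ i : Fin d, v i * (starRingEnd ℂ) (w i)

/-- The operator Q, acting as q^n on the n-th tensor component and fixing the vacuum. -/
noncomputable def Qop (d : ℕ) (q : ℂ) : Module.End ℂ (FockB d) :=
  Finsupp.lsum ℂ fun w => LinearMap.toSpanSingleton ℂ (FockB d)
    (q ^ w.length • Finsupp.single w (1 : ℂ))

section StmtTwelveHelpers

variable {d : ℕ}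

lemma lCr_single (i : Fin d) (w : List (Fin d)) (c : ℂ) :
    lCr d i (Finsupp.single w c) = Finsupp.single (i :: w) c := by
  simp [lCr, Finsupp.lmapDomain_apply, Finsupp.mapDomain_single]

lemma rCr_single (i : Fin d) (w : List (Fin d)) (c : ℂ) :
    rCr d i (Finsupp.single w c) = Finsupp.single (w ++ [i]) c := by
  simp [rCr, Finsupp.lmapDomain_apply, Finsupp.mapDomain_single]

lemma lAnn_single (q : ℂ) (i : Fin d) (w : List (Fin d)) :
    lAnn d q i (Finsupp.single w 1) =
      ∑ k ∈ Finset.range w.length,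
        if w[k]? = some i then q ^ k • Finsupp.single (w.eraseIdx k) (1:ℂ) else 0 := by
  simp [lAnn, Finsupp.lsum_single, LinearMap.toSpanSingleton_apply]

lemma rAnn_single (q : ℂ) (i : Fin d) (w : List (Fin d)) :
    rAnn d q i (Finsupp.single w 1) =
      ∑ k ∈ Finset.range w.length,
        if w[w.length - 1 - k]? = some i then
          q ^ k • Finsupp.single (w.eraseIdx (w.length - 1 - k)) (1:ℂ) else 0 := by
  simp [rAnn, Finsupp.lsum_single, LinearMap.toSpanSingleton_apply]

lemma Qop_single (q : ℂ) (w : List (Fin d)) :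
    Qop d q (Finsupp.single w 1) = q ^ w.length • Finsupp.single w (1:ℂ) := by
  simp [Qop, Finsupp.lsum_single, LinearMap.toSpanSingleton_apply]

lemma end_ext {f g : Module.End ℂ (FockB d)}
    (h : ∀ w : List (Fin d), f (Finsupp.single w 1) = g (Finsupp.single w 1)) : f = g := by
  apply Finsupp.lhom_ext
  intro w c
  have hc : (Finsupp.single w c : FockB d) = c • Finsupp.single w 1 := by
    simp [Finsupp.smul_single]
  rw [hc, map_smul, map_smul, h]

lemma eraseIdx_eraseIdx_comm {α : Type*} (l : List α) (a b : ℕ) (h : a ≤ b) :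
    (l.eraseIdx a).eraseIdx b = (l.eraseIdx (b+1)).eraseIdx a := by
  apply List.ext_getElem?
  intro n
  simp only [List.getElem?_eraseIdx]
  split_ifs <;> first | rfl | omega | (congr 1; omega)

end StmtTwelveHelpers
section StmtTwelveCore

variable {d : ℕ}

lemma comm_lCr_rCr (i j : Fin d) : lCr d i * rCr d j = rCr d j * lCr d i := by
  apply end_ext; intro w
  simp [Module.End.mul_apply, lCr_single, rCr_single]

lemma comm_lAnn_rCr (q : ℂ) (i j : Fin d) :
    lAnn d q i * rCr d j - rCr d j * lAnn d q i
      = if j = i then Qop d q else 0 := by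
  apply end_ext; intro w
  simp only [LinearMap.sub_apply, Module.End.mul_apply, rCr_single, lAnn_single]
  have hlen : (w ++ [j]).length = w.length + 1 := by simp
  rw [hlen, Finset.sum_range_succ]
  have hmain : ∀ k ∈ Finset.range w.length,
      (if (w ++ [j])[k]? = some i then q ^ k • Finsupp.single ((w ++ [j]).eraseIdx k) (1:ℂ) else 0)
        = rCr d j (if w[k]? = some i then q ^ k • Finsupp.single (w.eraseIdx k) (1:ℂ) else 0) := by
    intro k hk
    rw [Finset.mem_range] at hk
    rw [List.getElem?_append_left hk, List.eraseIdx_append_of_lt_length hk]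
    by_cases hc : w[k]? = some i
    · simp [hc, rCr_single]
    · simp [hc]
  rw [Finset.sum_congr rfl hmain, ← map_sum, add_sub_cancel_left]
  have h1 : (w ++ [j])[w.length]? = some j := by
    rw [List.getElem?_append_right (le_refl _)]; simp
  have h2 : (w ++ [j]).eraseIdx w.length = w := by
    rw [List.eraseIdx_append_of_length_le (le_refl _)]; simp
  rw [h1, h2]
  by_cases hji : j = i
  · simp [hji, Qop_single]
  · simp only [Option.some.injEq]
    rw [if_neg hji, if_neg hji]
    simp

lemma comm_rAnn_lCr (q : ℂ) (i j : Fin d) :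
    rAnn d q j * lCr d i - lCr d i * rAnn d q j
      = if i = j then Qop d q else 0 := by
  apply end_ext; intro w
  simp only [LinearMap.sub_apply, Module.End.mul_apply, lCr_single, rAnn_single]
  have hlen : (i :: w).length = w.length + 1 := by simp
  rw [hlen, Finset.sum_range_succ]
  have hmain : ∀ k ∈ Finset.range w.length,
      (if (i :: w)[w.length + 1 - 1 - k]? = some j then
          q ^ k • Finsupp.single ((i :: w).eraseIdx (w.length + 1 - 1 - k)) (1:ℂ) else 0)
        = lCr d i (if w[w.length - 1 - k]? = some j then
            q ^ k • Finsupp.single (w.eraseIdx (w.length - 1 - k)) (1:ℂ) else 0) := by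
    intro k hk
    rw [Finset.mem_range] at hk
    have hidx : w.length + 1 - 1 - k = (w.length - 1 - k) + 1 := by omega
    rw [hidx, List.getElem?_cons_succ, List.eraseIdx_cons_succ]
    by_cases hc : w[w.length - 1 - k]? = some j
    · simp [hc, lCr_single]
    · simp [hc]
  rw [Finset.sum_congr rfl hmain, ← map_sum, add_sub_cancel_left]
  have hidx0 : w.length + 1 - 1 - w.length = 0 := by omega
  rw [hidx0]
  simp only [List.getElem?_cons_zero, List.eraseIdx_cons_zero, Option.some.injEq]
  by_cases hij : i = j
  · simp [hij, Qop_single]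
  · rw [if_neg hij, if_neg hij]
    simp

end StmtTwelveCore
lemma comm_lAnn_rAnn {d : ℕ} (q : ℂ) (i j : Fin d) :
    lAnn d q i * rAnn d q j = rAnn d q j * lAnn d q i := by
  apply end_ext; intro w
  simp only [Module.End.mul_apply, rAnn_single, lAnn_single, map_sum]
  have hA : ∀ m ∈ Finset.range w.length,
      lAnn d q i (if w[w.length - 1 - m]? = some j then
          q ^ m • Finsupp.single (w.eraseIdx (w.length - 1 - m)) (1:ℂ) else 0)
      = ∑ k ∈ Finset.range (w.length - 1),
          if w[w.length - 1 - m]? = some j ∧ (w.eraseIdx (w.length - 1 - m))[k]? = some i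
          then (q ^ m * q ^ k) • Finsupp.single ((w.eraseIdx (w.length - 1 - m)).eraseIdx k) (1:ℂ)
          else 0 := by
    intro m hm
    rw [Finset.mem_range] at hm
    by_cases hc : w[w.length - 1 - m]? = some j
    · have hlen : (w.eraseIdx (w.length - 1 - m)).length = w.length - 1 :=
        List.length_eraseIdx_of_lt (by omega)
      rw [if_pos hc, map_smul, lAnn_single, hlen, Finset.smul_sum]
      refine Finset.sum_congr rfl fun k hk => ?_
      by_cases hc2 : (w.eraseIdx (w.length - 1 - m))[k]? = some i
      · rw [if_pos hc2, if_pos ⟨hc, hc2⟩, smul_smul]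
      · rw [if_neg hc2, if_neg (by tauto), smul_zero]
    · rw [if_neg hc, map_zero]
      exact (Finset.sum_eq_zero fun k _ => by rw [if_neg (by tauto)]).symm
  have hB : ∀ k ∈ Finset.range w.length,
      rAnn d q j (if w[k]? = some i then q ^ k • Finsupp.single (w.eraseIdx k) (1:ℂ) else 0)
      = ∑ m ∈ Finset.range (w.length - 1),
          if (w.eraseIdx k)[w.length - 1 - 1 - m]? = some j ∧ w[k]? = some i
          then (q ^ m * q ^ k) • Finsupp.single ((w.eraseIdx k).eraseIdx (w.length - 1 - 1 - m)) (1:ℂ)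
          else 0 := by
    intro k hk
    rw [Finset.mem_range] at hk
    by_cases hc : w[k]? = some i
    · have hlen : (w.eraseIdx k).length = w.length - 1 := List.length_eraseIdx_of_lt hk
      rw [if_pos hc, map_smul, rAnn_single, hlen, Finset.smul_sum]
      refine Finset.sum_congr rfl fun m hm => ?_
      by_cases hc2 : (w.eraseIdx k)[w.length - 1 - 1 - m]? = some j
      · rw [if_pos hc2, if_pos ⟨hc2, hc⟩, smul_smul, mul_comm (q ^ k)]
      · rw [if_neg hc2, if_neg (by tauto), smul_zero]
    · rw [if_neg hc, map_zero]
      exact (Finset.sum_eq_zero fun m _ => by rw [if_neg (by tauto)]).symm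
  rw [Finset.sum_congr rfl hA, Finset.sum_congr rfl hB,
      ← Finset.sum_product', ← Finset.sum_product']
  refine Finset.sum_nbij'
    (fun p => if p.2 + 1 ≤ w.length - 1 - p.1 then (p.2, p.1) else (p.2 + 1, p.1 - 1))
    (fun p => if p.1 + 1 ≤ w.length - 1 - p.2 then (p.2, p.1) else (p.2 + 1, p.1 - 1))
    ?_ ?_ ?_ ?_ ?_
  · intro p hp
    simp only [Finset.mem_product, Finset.mem_range] at hp
    obtain ⟨a, b⟩ := p
    obtain ⟨h1, h2⟩ := hp
    dsimp only
    split_ifs <;> simp only [Finset.mem_product, Finset.mem_range] <;> constructor <;> omega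
  · intro p hp
    simp only [Finset.mem_product, Finset.mem_range] at hp
    obtain ⟨a, b⟩ := p
    obtain ⟨h1, h2⟩ := hp
    dsimp only
    split_ifs <;> simp only [Finset.mem_product, Finset.mem_range] <;> constructor <;> omega
  · intro p hp
    simp only [Finset.mem_product, Finset.mem_range] at hp
    obtain ⟨m, k⟩ := p
    obtain ⟨h1, h2⟩ := hp
    dsimp only
    split_ifs <;> simp only [Prod.mk.injEq] at * <;> omega
  · intro p hp
    simp only [Finset.mem_product, Finset.mem_range] at hp
    obtain ⟨k, m⟩ := p
    obtain ⟨h1, h2⟩ := hp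
    dsimp only
    split_ifs <;> simp only [Prod.mk.injEq] at * <;> omega
  · intro p hp
    simp only [Finset.mem_product, Finset.mem_range] at hp
    obtain ⟨m, k⟩ := p
    obtain ⟨hm, hk⟩ := hp
    dsimp only at *
    by_cases hcase : k + 1 ≤ w.length - 1 - m
    · rw [if_pos hcase]
      dsimp only
      have e1 : (w.eraseIdx (w.length - 1 - m))[k]? = w[k]? :=
        List.getElem?_eraseIdx_of_lt (by omega)
      have e2 : (w.eraseIdx k)[w.length - 1 - 1 - m]? = w[w.length - 1 - m]? := by
        rw [List.getElem?_eraseIdx_of_ge (by omega)]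
        congr 1
        omega
      have e3 : (w.eraseIdx (w.length - 1 - m)).eraseIdx k
          = (w.eraseIdx k).eraseIdx (w.length - 1 - 1 - m) := by
        rw [eraseIdx_eraseIdx_comm w k (w.length - 1 - 1 - m) (by omega)]
        have : w.length - 1 - 1 - m + 1 = w.length - 1 - m := by omega
        rw [this]
      rw [e1, e2, e3]
    · rw [if_neg hcase]
      dsimp only
      have hm1 : 1 ≤ m := by omega
      have e1 : (w.eraseIdx (w.length - 1 - m))[k]? = w[k + 1]? :=
        List.getElem?_eraseIdx_of_ge (by omega)
      have eidx : w.length - 1 - 1 - (m - 1) = w.length - 1 - m := by omega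
      have e2 : (w.eraseIdx (k + 1))[w.length - 1 - 1 - (m - 1)]? = w[w.length - 1 - m]? := by
        rw [eidx]
        exact List.getElem?_eraseIdx_of_lt (by omega)
      have e3 : (w.eraseIdx (w.length - 1 - m)).eraseIdx k
          = (w.eraseIdx (k + 1)).eraseIdx (w.length - 1 - 1 - (m - 1)) := by
        rw [eidx]
        exact eraseIdx_eraseIdx_comm w (w.length - 1 - m) k (by omega)
      have es : (q ^ m * q ^ k : ℂ) = q ^ (m - 1) * q ^ (k + 1) := by
        rw [← pow_add, ← pow_add]
        congr 1
        omega
      rw [e1, e2, e3, es]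
section Assembly
variable {d : ℕ}

lemma esub_self (A : Module.End ℂ (FockB d)) : A - A = 0 := sub_self A

lemma eneg_sub (A B : Module.End ℂ (FockB d)) : -(A - B) = B - A :=
  neg_sub (α := Module.End ℂ (FockB d)) A B

lemma eneg_zero : -(0 : Module.End ℂ (FockB d)) = 0 :=
  neg_zero (G := Module.End ℂ (FockB d))

lemma esmul_zero (c : ℂ) : c • (0 : Module.End ℂ (FockB d)) = 0 := smul_zero c

lemma esmul_ite (c : ℂ) (P : Prop) [Decidable P] (A B : Module.End ℂ (FockB d)) :
    c • (if P then A else B) = if P then c • A else c • B := by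
  split_ifs <;> rfl

lemma esmul_neg (c : ℂ) (A : Module.End ℂ (FockB d)) : c • (-A) = -(c • A) := smul_neg c A

lemma eneg_smul (c : ℂ) (A : Module.End ℂ (FockB d)) : (-c) • A = -(c • A) := neg_smul c A

lemma esum_smul (c : Fin d → ℂ) (A : Module.End ℂ (FockB d)) :
    (∑ i : Fin d, c i) • A = ∑ i : Fin d, c i • A := Finset.sum_smul

lemma esum_neg (f : Fin d → Module.End ℂ (FockB d)) :
    (∑ i : Fin d, -(f i)) = -∑ i : Fin d, f i :=
  Finset.sum_neg_distrib (G := Module.End ℂ (FockB d)) f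

lemma esum_ite_eq' (b : Fin d) (f : Fin d → Module.End ℂ (FockB d)) :
    (∑ a : Fin d, if a = b then f a else 0) = f b :=
  (Finset.sum_ite_eq' Finset.univ b f).trans (if_pos (Finset.mem_univ b))

lemma esum_ite_eq (b : Fin d) (f : Fin d → Module.End ℂ (FockB d)) :
    (∑ a : Fin d, if b = a then f a else 0) = f b :=
  (Finset.sum_ite_eq Finset.univ b f).trans (if_pos (Finset.mem_univ b))

lemma esmul_sub (c : ℂ) (A B : Module.End ℂ (FockB d)) :
    c • (A - B) = c • A - c • B := smul_sub c A B

lemma esum_sub (f g : Fin d → Module.End ℂ (FockB d)) :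
    (∑ i : Fin d, (f i - g i)) = (∑ i : Fin d, f i) - ∑ i : Fin d, g i :=
  Finset.sum_sub_distrib (G := Module.End ℂ (FockB d)) f g

lemma comm_key (a b : Fin d → ℂ) (A B : Fin d → Module.End ℂ (FockB d)) :
    (∑ i : Fin d, a i • A i) * (∑ j : Fin d, b j • B j)
      - (∑ j : Fin d, b j • B j) * (∑ i : Fin d, a i • A i)
    = ∑ i : Fin d, ∑ j : Fin d, (a i * b j) • (A i * B j - B j * A i) := by
  simp only [esmul_sub, esum_sub]
  congr 1
  · rw [Finset.sum_mul_sum]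
    refine Finset.sum_congr rfl fun i _ => Finset.sum_congr rfl fun j _ => ?_
    rw [smul_mul_assoc, mul_smul_comm, smul_smul]
  · rw [Finset.sum_mul_sum,
        Finset.sum_comm (s := Finset.univ) (t := Finset.univ)
          (f := fun j i => (b j • B j) * (a i • A i))]
    refine Finset.sum_congr rfl fun i _ => Finset.sum_congr rfl fun j _ => ?_
    rw [smul_mul_assoc, mul_smul_comm, smul_smul, mul_comm (b j)]

end Assembly
/-- [L*(v), R(w)] = ⟨w,v⟩·Q, [L(v), R*(w)] = −⟨v,w⟩·Q,
[L(v), R(w)] = 0 and [L*(v), R*(w)] = 0. -/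
theorem stmt_12 (d : ℕ) (q : ℝ) (hq1 : -1 < q) (hq2 : q < 1) (v w : Fin d → ℂ) :
    lAnnV d (q : ℂ) v * rCrV d w - rCrV d w * lAnnV d (q : ℂ) v
      = (cInner d w v) • Qop d (q : ℂ) ∧
    lCrV d v * rAnnV d (q : ℂ) w - rAnnV d (q : ℂ) w * lCrV d v
      = (-(cInner d v w)) • Qop d (q : ℂ) ∧
    lCrV d v * rCrV d w - rCrV d w * lCrV d v = 0 ∧
    lAnnV d (q : ℂ) v * rAnnV d (q : ℂ) w - rAnnV d (q : ℂ) w * lAnnV d (q : ℂ) v = 0 := by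
  refine ⟨?_, ?_, ?_, ?_⟩
  · rw [lAnnV, rCrV, comm_key]
    simp only [comm_lAnn_rCr, esmul_ite, esmul_zero, esum_ite_eq']
    rw [cInner, esum_smul]
    exact Finset.sum_congr rfl fun i _ => by rw [mul_comm]
  · rw [lCrV, rAnnV, comm_key]
    have hneg : ∀ i j : Fin d, lCr d i * rAnn d (q:ℂ) j - rAnn d (q:ℂ) j * lCr d i
        = if i = j then -(Qop d (q:ℂ)) else 0 := by
      intro i j
      calc lCr d i * rAnn d (q:ℂ) j - rAnn d (q:ℂ) j * lCr d i
          = -(rAnn d (q:ℂ) j * lCr d i - lCr d i * rAnn d (q:ℂ) j) := (eneg_sub _ _).symm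
        _ = -(if i = j then Qop d (q:ℂ) else 0) := by rw [comm_rAnn_lCr]
        _ = if i = j then -(Qop d (q:ℂ)) else 0 := by split_ifs <;> [rfl; exact eneg_zero]
    simp only [hneg, esmul_ite, esmul_zero, esum_ite_eq]
    rw [cInner, eneg_smul, esum_smul, ← esum_neg]
    exact Finset.sum_congr rfl fun i _ => esmul_neg _ _
  · rw [lCrV, rCrV, comm_key]
    refine Finset.sum_eq_zero fun i _ => Finset.sum_eq_zero fun j _ => ?_
    rw [comm_lCr_rCr, esub_self, esmul_zero]
  · rw [lAnnV, rAnnV, comm_key]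
    refine Finset.sum_eq_zero fun i _ => Finset.sum_eq_zero fun j _ => ?_
    rw [comm_lAnn_rAnn, esub_self, esmul_zero]
end
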